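/- For all integers m ≥ 1 and odd n = 2k+1 ≥ 1 with m + n ≥ 3, the spider Sp(1^[m], 2^[n]) admits a local antimagic total labeling f : V ∪ E → {1,...,2m+8k+5} with exactly 3 distinct vertex weights, namely w(u_j) = 9k+6 for all j, w(y_i) = w(v_j) = 2m + 12k + 7 for all i, j, and w(x) = m(m+12k+7)/2 + 2m + 2k² + 11k + 6. -/

import Mathlib

open Finset

variable {V : Type*} [Fintype V] [DecidableEq V]

/-- The weight of a vertex `u` under the total labeling given by vertex labels `fv`
and edge labels `fe` : `w(u) = f(u) + \sum_{e incident to u} f(e)`. -/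
def latWeight (G : SimpleGraph V) [DecidableRel G.Adj]
    (fv : V → ℕ) (fe : Sym2 V → ℕ) (u : V) : ℕ :=
  fv u + ∑ v ∈ G.neighborFinset u, fe s(u, v)

/-- `fv, fe` together form a bijection from `V(G) ∪ E(G)` onto `{1, …, p + q}`,
where `p` is the order and `q` is the size of `G`. -/
def IsTotalLabeling (G : SimpleGraph V) [DecidableRel G.Adj]
    (fv : V → ℕ) (fe : Sym2 V → ℕ) : Prop :=
  Set.BijOn (Sum.elim fv (fun e : G.edgeSet => fe (e : Sym2 V))) Set.univ
    (Set.Icc 1 (Fintype.card V + G.edgeFinset.card))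

/-- A local antimagic total labeling of `G` : a bijective total labeling such that any two
adjacent vertices get distinct weights. -/
def IsLocalAntimagicTotal (G : SimpleGraph V) [DecidableRel G.Adj]
    (fv : V → ℕ) (fe : Sym2 V → ℕ) : Prop :=
  IsTotalLabeling G fv fe ∧
    ∀ ⦃u v : V⦄, G.Adj u v → latWeight G fv fe u ≠ latWeight G fv fe v

/-- The local antimagic total chromatic number `χ_lat(G)` : the minimum number of distinct
vertex weights taken over all local antimagic total labelings of `G`. -/
noncomputable def chiLat (G : SimpleGraph V) [DecidableRel G.Adj] : ℕ :=
  sInf {c | ∃ fv fe, IsLocalAntimagicTotal G fv fe ∧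
    (Finset.univ.image (latWeight G fv fe)).card = c}

instance {W : Type*} (r : W → W → Prop) [DecidableEq W] [DecidableRel r] :
    DecidableRel (SimpleGraph.fromRel r).Adj :=
  fun a b => decidable_of_iff _ (SimpleGraph.fromRel_adj r a b).symm

/-- Adjacency for the spider `Sp(1^[m], 2^[n])` : the center `x = none` is adjacent to each
leaf `y i = some (Sum.inl i)` and to each `u j = some (Sum.inr (j, false))`, and each `u j`
is adjacent to the leaf `v j = some (Sum.inr (j, true))`. -/
def spider12R (m n : ℕ) :
    Option (Fin m ⊕ Fin n × Bool) → Option (Fin m ⊕ Fin n × Bool) → Bool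
  | none, some (Sum.inl _) => true
  | none, some (Sum.inr (_, false)) => true
  | some (Sum.inr (j, false)), some (Sum.inr (j', true)) => decide (j = j')
  | _, _ => false

/-- The spider `Sp(1^[m], 2^[n])` with `m` legs of length `1` and `n` legs of length `2`. -/
abbrev spider12 (m n : ℕ) : SimpleGraph (Option (Fin m ⊕ Fin n × Bool)) :=
  SimpleGraph.fromRel (fun a b => spider12R m n a b = true)

/-! The labels `1, …, 2m + 8k + 5` are handed out in consecutive blocks (indices `i, j` from
`0`): `j + 1` to `xu_j`, `[2k+2, 4k+2]` to the `u_j`, `[4k+3, 6k+3]` to the `u_jv_j`, `6k+4+i`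
to `xy_i`, `[m+6k+4, 2m+6k+3]` to the `y_i`, `[2m+6k+4, 2m+8k+4]` to the `v_j` and the largest
label to `x`. Each leaf and its pendant edge get labels summing to `2m + 12k + 7`; within the
`u`-blocks the offsets are chosen so that every `u_j` has weight `9k + 6`; and the centre,
carrying the largest label and `m + n` edges, outweighs everything else. -/

open Function

lemma latWeight_eq_sum_ite {W : Type*} [Fintype W] (G : SimpleGraph W) [DecidableRel G.Adj]
    (fv : W → ℕ) (fe : Sym2 W → ℕ) (u : W) :
    latWeight G fv fe u = fv u + ∑ v, if G.Adj u v then fe s(u, v) else 0 := by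
  rw [latWeight, SimpleGraph.neighborFinset_eq_filter, sum_filter]

lemma sum_fin_val_mul_two (n : ℕ) : (∑ i : Fin n, (i : ℕ)) * 2 + n = n * n := by
  rw [Fin.sum_univ_eq_sum_range (fun i => i), sum_range_id_mul_two, Nat.mul_sub_one,
    Nat.sub_add_cancel (Nat.le_mul_self n)]

lemma bijOn_Icc_of_injective {α : Type*} [Fintype α] {f : α → ℕ} (hf : Injective f)
    (hmaps : ∀ a, f a ∈ Set.Icc 1 (Fintype.card α)) :
    Set.BijOn f Set.univ (Set.Icc 1 (Fintype.card α)) := by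
  have hsurj := Finset.surjOn_of_injOn_of_card_le (s := univ)
    (t := Icc 1 (Fintype.card α)) f (by simpa using hmaps) hf.injOn (by simp)
  rw [coe_univ, coe_Icc] at hsurj
  exact ⟨fun a _ => hmaps a, hf.injOn, hsurj⟩

lemma isTotalLabeling_extend {W X : Type*} [Fintype W] [Fintype X] {G : SimpleGraph W}
    [DecidableRel G.Adj] {φ : X → Sym2 W} (hφ : Injective φ)
    (hrange : Set.range φ = G.edgeSet)
    {fv : W → ℕ} {g : X → ℕ}
    (h : Set.BijOn (Sum.elim fv g) Set.univ
      (Set.Icc 1 (Fintype.card W + Fintype.card X))) :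
    IsTotalLabeling G fv (extend φ g 0) := by
  let e : X ≃ G.edgeSet := (Equiv.ofInjective φ hφ).trans (Equiv.setCongr hrange)
  have hcard : G.edgeFinset.card = Fintype.card X := by
    rw [SimpleGraph.edgeFinset_card, Fintype.card_congr e]
  have hcomp : Sum.elim fv (fun s : G.edgeSet => extend φ g 0 s) =
      Sum.elim fv g ∘ Equiv.sumCongr (Equiv.refl W) e.symm := by
    ext (v | s)
    · rfl
    · obtain ⟨x, rfl⟩ := e.surjective s
      simp [hφ.extend_apply, e]
  rw [IsTotalLabeling, hcomp, hcard]
  exact h.comp (Equiv.sumCongr (Equiv.refl W) e.symm).bijective.bijOn_univ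

namespace Spider12

variable {m n : ℕ}

/-- Each edge of the spider is indexed by its endpoint farther from the centre `x = none`;
`parent c` is the other endpoint. -/
def parent : Fin m ⊕ Fin n × Bool → Option (Fin m ⊕ Fin n × Bool)
  | .inr (j, true) => some (.inr (j, false))
  | _ => none

def edge (c : Fin m ⊕ Fin n × Bool) : Sym2 (Option (Fin m ⊕ Fin n × Bool)) :=
  s(parent c, some c)

lemma edge_injective : Injective (edge (m := m) (n := n)) := by
  rintro (i | ⟨j, _ | _⟩) (i' | ⟨j', _ | _⟩) h <;> simp_all [edge, parent]

lemma range_edge : Set.range (edge (m := m) (n := n)) = (spider12 m n).edgeSet := by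
  ext e
  constructor
  · rintro ⟨(i | ⟨j, _ | _⟩), rfl⟩ <;> simp [edge, parent, spider12R]
  · induction e with
    | _ a b =>
      rintro ⟨hne, hr⟩
      rcases a with _ | (i | ⟨j, _ | _⟩) <;> rcases b with _ | (i' | ⟨j', _ | _⟩) <;>
        simp_all [spider12R, edge, parent, Sum.exists, Sym2.eq_swap]

section Weights

variable (fv : Option (Fin m ⊕ Fin n × Bool) → ℕ)
  (fe : Sym2 (Option (Fin m ⊕ Fin n × Bool)) → ℕ)

lemma latWeight_none : latWeight (spider12 m n) fv fe none =
    fv none + ∑ i, fe (edge (.inl i)) + ∑ j, fe (edge (.inr (j, false))) := by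
  simp [latWeight_eq_sum_ite, Fintype.sum_option, Fintype.sum_sum_type, Fintype.sum_prod_type,
    spider12R, edge, parent, add_assoc]

lemma latWeight_inl (i : Fin m) : latWeight (spider12 m n) fv fe (some (.inl i)) =
    fv (some (.inl i)) + fe (edge (.inl i)) := by
  simp [latWeight_eq_sum_ite, Fintype.sum_option, spider12R, edge, parent, Sym2.eq_swap]

lemma latWeight_inr_false (j : Fin n) :
    latWeight (spider12 m n) fv fe (some (.inr (j, false))) =
    fv (some (.inr (j, false))) + fe (edge (.inr (j, false))) + fe (edge (.inr (j, true))) := by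
  simp [latWeight_eq_sum_ite, Fintype.sum_option, Fintype.sum_sum_type, Fintype.sum_prod_type,
    spider12R, edge, parent, Sym2.eq_swap, add_assoc]

lemma latWeight_inr_true (j : Fin n) : latWeight (spider12 m n) fv fe (some (.inr (j, true))) =
    fv (some (.inr (j, true))) + fe (edge (.inr (j, true))) := by
  simp [latWeight_eq_sum_ite, Fintype.sum_option, Fintype.sum_sum_type, Fintype.sum_prod_type,
    spider12R, edge, parent, Sym2.eq_swap]

end Weights

lemma ne_of_adj {w : Option (Fin m ⊕ Fin n × Bool) → ℕ}
    (hy : ∀ i, w none ≠ w (some (.inl i))) (hu : ∀ j, w none ≠ w (some (.inr (j, false))))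
    (huv : ∀ j, w (some (.inr (j, false))) ≠ w (some (.inr (j, true)))) :
    ∀ ⦃a b⦄, (spider12 m n).Adj a b → w a ≠ w b := by
  rintro (_ | (i | ⟨j, _ | _⟩)) (_ | (i' | ⟨j', _ | _⟩)) hab <;>
    simp_all [spider12R, eq_comm]

lemma image_eq_of_weights {w : Option (Fin m ⊕ Fin n × Bool) → ℕ} {a b : ℕ} (hm : 0 < m)
    (hn : 0 < n) (hy : ∀ i, w (some (.inl i)) = a) (hu : ∀ j, w (some (.inr (j, false))) = b)
    (hv : ∀ j, w (some (.inr (j, true))) = a) :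
    univ.image w = {w none, a, b} := by
  have : Nonempty (Fin m) := Fin.pos_iff_nonempty.mp hm
  have : Nonempty (Fin n) := Fin.pos_iff_nonempty.mp hn
  ext t
  simp [Option.exists, Sum.exists, Prod.exists, Bool.exists_bool, hy, hu, hv, eq_comm]
  tauto

section Labeling

/-! With `n = 2k + 1`, `uOffset k j = (j + k) mod n` and `uvOffset k j = (2k - 2j) mod n` are
permutations of `{0, …, 2k}` whose sum with `j` is identically `3k`. -/

variable {k : ℕ}

def uOffset (k j : ℕ) : ℕ := if j ≤ k then k + j else j - (k + 1)

def uvOffset (k j : ℕ) : ℕ := if j ≤ k then 2 * k - 2 * j else 4 * k + 1 - 2 * j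

lemma uvOffset_le (j : ℕ) : uvOffset k j ≤ 2 * k := by
  unfold uvOffset; split <;> omega

lemma add_uOffset_add_uvOffset {j : ℕ} (hj : j < 2 * k + 1) :
    j + uOffset k j + uvOffset k j = 3 * k := by
  unfold uOffset uvOffset; split <;> omega

def vertexLabel (m k : ℕ) : Option (Fin m ⊕ Fin (2 * k + 1) × Bool) → ℕ
  | none => 2 * m + 8 * k + 5
  | some (.inl i) => 2 * m + 6 * k + 3 - i
  | some (.inr (j, false)) => 2 * k + 2 + uOffset k j
  | some (.inr (j, true)) => 2 * m + 8 * k + 4 - uvOffset k j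

def edgeLabel (m k : ℕ) : Fin m ⊕ Fin (2 * k + 1) × Bool → ℕ
  | .inl i => 6 * k + 4 + i
  | .inr (j, false) => j + 1
  | .inr (j, true) => 4 * k + 3 + uvOffset k j

lemma label_injective : Injective (Sum.elim (vertexLabel m k) (edgeLabel m k)) := by
  rintro ((_ | (i | ⟨j, _ | _⟩)) | (i | ⟨j, _ | _⟩))
    ((_ | (i' | ⟨j', _ | _⟩)) | (i' | ⟨j', _ | _⟩)) h <;>
    simp only [Sum.elim_inl, Sum.elim_inr, vertexLabel, edgeLabel, uOffset, uvOffset] at h <;>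
    simp only [Sum.inl.injEq, Sum.inr.injEq, Option.some.injEq, Prod.mk.injEq, Fin.ext_iff,
      reduceCtorEq, and_true] <;>
    (try split_ifs at h) <;> omega

lemma label_mem_Icc
    (a : Option (Fin m ⊕ Fin (2 * k + 1) × Bool) ⊕ (Fin m ⊕ Fin (2 * k + 1) × Bool)) :
    Sum.elim (vertexLabel m k) (edgeLabel m k) a ∈ Set.Icc 1 (2 * m + 8 * k + 5) := by
  rcases a with (_ | (i | ⟨j, _ | _⟩)) | (i | ⟨j, _ | _⟩) <;>
    simp only [Sum.elim_inl, Sum.elim_inr, vertexLabel, edgeLabel, uOffset, uvOffset,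
      Set.mem_Icc] <;>
    (try split_ifs) <;> omega

noncomputable def edgeLabeling (m k : ℕ) :
    Sym2 (Option (Fin m ⊕ Fin (2 * k + 1) × Bool)) → ℕ :=
  extend edge (edgeLabel m k) 0

lemma edgeLabeling_edge (c : Fin m ⊕ Fin (2 * k + 1) × Bool) :
    edgeLabeling m k (edge c) = edgeLabel m k c :=
  edge_injective.extend_apply _ _ _

lemma card_option_sum_self : Fintype.card (Option (Fin m ⊕ Fin (2 * k + 1) × Bool) ⊕
    (Fin m ⊕ Fin (2 * k + 1) × Bool)) = 2 * m + 8 * k + 5 := by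
  simp only [Fintype.card_sum, Fintype.card_option, Fintype.card_prod, Fintype.card_fin,
    Fintype.card_bool]
  ring

lemma isTotalLabeling_label :
    IsTotalLabeling (spider12 m (2 * k + 1)) (vertexLabel m k) (edgeLabeling m k) := by
  apply isTotalLabeling_extend edge_injective range_edge
  rw [← Fintype.card_sum]
  refine bijOn_Icc_of_injective label_injective fun a => ?_
  rw [card_option_sum_self]
  exact label_mem_Icc a

noncomputable abbrev weight (m k : ℕ) : Option (Fin m ⊕ Fin (2 * k + 1) × Bool) → ℕ :=
  latWeight (spider12 m (2 * k + 1)) (vertexLabel m k) (edgeLabeling m k)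

lemma weight_inl (i : Fin m) :
    weight m k (some (.inl i)) = 2 * m + 12 * k + 7 := by
  rw [weight, latWeight_inl, edgeLabeling_edge]
  simp only [vertexLabel, edgeLabel]
  omega

lemma weight_inr_false (j : Fin (2 * k + 1)) :
    weight m k (some (.inr (j, false))) = 9 * k + 6 := by
  rw [weight, latWeight_inr_false, edgeLabeling_edge, edgeLabeling_edge]
  have := add_uOffset_add_uvOffset j.isLt
  simp only [vertexLabel, edgeLabel]
  omega

lemma weight_inr_true (j : Fin (2 * k + 1)) :
    weight m k (some (.inr (j, true))) = 2 * m + 12 * k + 7 := by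
  rw [weight, latWeight_inr_true, edgeLabeling_edge]
  have := uvOffset_le (k := k) j
  simp only [vertexLabel, edgeLabel]
  omega

lemma two_mul_weight_none :
    2 * weight m k none =
      m * (m + 12 * k + 7) + 2 * (2 * m + 2 * k ^ 2 + 11 * k + 6) := by
  simp only [weight, latWeight_none, edgeLabeling_edge, vertexLabel, edgeLabel, sum_add_distrib,
    sum_const, card_univ, Fintype.card_fin, smul_eq_mul]
  have := sum_fin_val_mul_two m
  have := sum_fin_val_mul_two (2 * k + 1)
  linarith

lemma weight_none_gt (hm : 1 ≤ m) :
    2 * m + 12 * k + 7 < weight m k none := by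
  have := two_mul_weight_none (m := m) (k := k)
  have := Nat.le_mul_of_pos_left (m + 12 * k + 7) hm
  omega

lemma isLocalAntimagicTotal_label (hm : 1 ≤ m) :
    IsLocalAntimagicTotal (spider12 m (2 * k + 1)) (vertexLabel m k) (edgeLabeling m k) := by
  have hx := weight_none_gt (k := k) hm
  refine ⟨isTotalLabeling_label, ne_of_adj (w := weight m k) (fun i => ?_) (fun j => ?_)
    (fun j => ?_)⟩
  · rw [weight_inl]; omega
  · rw [weight_inr_false]; omega
  · rw [weight_inr_false, weight_inr_true]; omega

lemma card_image_weight (hm : 1 ≤ m) : (univ.image (weight m k)).card = 3 := by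
  have hx := weight_none_gt (k := k) hm
  rw [image_eq_of_weights hm (Nat.succ_pos _) weight_inl weight_inr_false weight_inr_true]
  exact card_eq_three.mpr ⟨_, _, _, by omega, by omega, by omega, rfl⟩

end Labeling

end Spider12

open Spider12

theorem spider12_odd_three_weights_general (m k : ℕ) (hm : 1 ≤ m) :
    ∃ fv fe, IsLocalAntimagicTotal (spider12 m (2 * k + 1)) fv fe ∧
      (Finset.univ.image (latWeight (spider12 m (2 * k + 1)) fv fe)).card = 3 ∧
      (∀ j : Fin (2 * k + 1),
        latWeight (spider12 m (2 * k + 1)) fv fe (some (Sum.inr (j, false))) = 9 * k + 6) ∧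
      (∀ i : Fin m,
        latWeight (spider12 m (2 * k + 1)) fv fe (some (Sum.inl i)) = 2 * m + 12 * k + 7) ∧
      (∀ j : Fin (2 * k + 1),
        latWeight (spider12 m (2 * k + 1)) fv fe (some (Sum.inr (j, true))) =
          2 * m + 12 * k + 7) ∧
      2 * latWeight (spider12 m (2 * k + 1)) fv fe none =
        m * (m + 12 * k + 7) + 2 * (2 * m + 2 * k ^ 2 + 11 * k + 6) := by
  exact ⟨vertexLabel m k, edgeLabeling m k, isLocalAntimagicTotal_label hm, card_image_weight hm,
    weight_inr_false, weight_inl, weight_inr_true, two_mul_weight_none⟩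

/-- For all `m ≥ 1` and odd `n = 2k+1 ≥ 1` with `m + n ≥ 3`, the spider `Sp(1^[m], 2^[n])`
admits a local antimagic total labeling (into `{1, …, 2m+8k+5}`) with exactly `3` distinct
vertex weights, namely `w(u_j) = 9k + 6`, `w(y_i) = w(v_j) = 2m + 12k + 7` and
`w(x) = m(m+12k+7)/2 + 2m + 2k² + 11k + 6` (stated multiplied by `2` to avoid division). -/
theorem spider12_odd_three_weights (m k : ℕ) (hm : 1 ≤ m) (hmn : 3 ≤ m + (2 * k + 1)) :
    ∃ fv fe, IsLocalAntimagicTotal (spider12 m (2 * k + 1)) fv fe ∧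
      (Finset.univ.image (latWeight (spider12 m (2 * k + 1)) fv fe)).card = 3 ∧
      (∀ j : Fin (2 * k + 1),
        latWeight (spider12 m (2 * k + 1)) fv fe (some (Sum.inr (j, false))) = 9 * k + 6) ∧
      (∀ i : Fin m,
        latWeight (spider12 m (2 * k + 1)) fv fe (some (Sum.inl i)) = 2 * m + 12 * k + 7) ∧
      (∀ j : Fin (2 * k + 1),
        latWeight (spider12 m (2 * k + 1)) fv fe (some (Sum.inr (j, true))) =
          2 * m + 12 * k + 7) ∧
      2 * latWeight (spider12 m (2 * k + 1)) fv fe none =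
        m * (m + 12 * k + 7) + 2 * (2 * m + 2 * k ^ 2 + 11 * k + 6) :=
  spider12_odd_three_weights_general m k hm
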